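/- arXiv:1712.10029 — 5 statements merged into one kernel-verified Lean document; each statement's English description precedes it below -/
import Mathlib

section
/- (Dual Woodbury identity.) Let M, E be linear operators and Q a linear map between finite-dimensional complex vector spaces, let b be an invertible operator on the target of Q, and set B = (b + E)⁻¹ (assumed to exist), S = (M + Q*bQ)⁻¹ (assumed to exist), D = b − bQSQ*b. If S_y := (M + Q*bQ − Q*bBbQ)⁻¹ exists, then D + E is invertible and (D + E)⁻¹ = B + B bQ S_y Q* b B. -/
theorem woodbury_aux {R V W : Type*} [CommRing R]
    [AddCommGroup V] [Module R V] [AddCommGroup W] [Module R W]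
    (M : V →ₗ[R] V) (E : W →ₗ[R] W) (Q : V →ₗ[R] W) (Qa : W →ₗ[R] V)
    (b : W →ₗ[R] W) (B : W →ₗ[R] W)
    (hB1 : (b + E) ∘ₗ B = LinearMap.id) (hB2 : B ∘ₗ (b + E) = LinearMap.id)
    (S : V →ₗ[R] V)
    (hS1 : (M + Qa ∘ₗ b ∘ₗ Q) ∘ₗ S = LinearMap.id)
    (hS2 : S ∘ₗ (M + Qa ∘ₗ b ∘ₗ Q) = LinearMap.id)
    (D : W →ₗ[R] W)
    (hD : D = b - b ∘ₗ Q ∘ₗ S ∘ₗ Qa ∘ₗ b)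
    (Sy : V →ₗ[R] V)
    (hSy1 : (M + Qa ∘ₗ b ∘ₗ Q - Qa ∘ₗ b ∘ₗ B ∘ₗ b ∘ₗ Q) ∘ₗ Sy = LinearMap.id)
    (hSy2 : Sy ∘ₗ (M + Qa ∘ₗ b ∘ₗ Q - Qa ∘ₗ b ∘ₗ B ∘ₗ b ∘ₗ Q) = LinearMap.id) :
    (D + E) ∘ₗ (B + B ∘ₗ b ∘ₗ Q ∘ₗ Sy ∘ₗ Qa ∘ₗ b ∘ₗ B) = LinearMap.id ∧
    (B + B ∘ₗ b ∘ₗ Q ∘ₗ Sy ∘ₗ Qa ∘ₗ b ∘ₗ B) ∘ₗ (D + E) = LinearMap.id := by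
  have hDE : D + E = (b + E) - b ∘ₗ Q ∘ₗ S ∘ₗ Qa ∘ₗ b := by rw [hD]; abel
  -- key identity 1 : Sy = S + S ∘ R ∘ Sy
  have hKey1 : Sy = S + S ∘ₗ (Qa ∘ₗ b ∘ₗ B ∘ₗ b ∘ₗ Q) ∘ₗ Sy := by
    calc Sy = LinearMap.id ∘ₗ Sy := (LinearMap.id_comp _).symm
    _ = (S ∘ₗ (M + Qa ∘ₗ b ∘ₗ Q)) ∘ₗ Sy := by rw [hS2]
    _ = S ∘ₗ ((M + Qa ∘ₗ b ∘ₗ Q) ∘ₗ Sy) := LinearMap.comp_assoc _ _ _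
    _ = S ∘ₗ (((M + Qa ∘ₗ b ∘ₗ Q - Qa ∘ₗ b ∘ₗ B ∘ₗ b ∘ₗ Q)
          + Qa ∘ₗ b ∘ₗ B ∘ₗ b ∘ₗ Q) ∘ₗ Sy) := by rw [sub_add_cancel]
    _ = S ∘ₗ ((M + Qa ∘ₗ b ∘ₗ Q - Qa ∘ₗ b ∘ₗ B ∘ₗ b ∘ₗ Q) ∘ₗ Sy
          + (Qa ∘ₗ b ∘ₗ B ∘ₗ b ∘ₗ Q) ∘ₗ Sy) := by rw [LinearMap.add_comp]
    _ = S ∘ₗ (LinearMap.id + (Qa ∘ₗ b ∘ₗ B ∘ₗ b ∘ₗ Q) ∘ₗ Sy) := by rw [hSy1]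
    _ = S + S ∘ₗ (Qa ∘ₗ b ∘ₗ B ∘ₗ b ∘ₗ Q) ∘ₗ Sy := by
          rw [LinearMap.comp_add, LinearMap.comp_id, ← LinearMap.comp_assoc]
  -- key identity 2 : Sy = S + Sy ∘ R ∘ S
  have hKey2 : Sy = S + Sy ∘ₗ (Qa ∘ₗ b ∘ₗ B ∘ₗ b ∘ₗ Q) ∘ₗ S := by
    calc Sy = Sy ∘ₗ LinearMap.id := (LinearMap.comp_id _).symm
    _ = Sy ∘ₗ ((M + Qa ∘ₗ b ∘ₗ Q) ∘ₗ S) := by rw [hS1]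
    _ = (Sy ∘ₗ (M + Qa ∘ₗ b ∘ₗ Q)) ∘ₗ S := (LinearMap.comp_assoc _ _ _).symm
    _ = (Sy ∘ₗ ((M + Qa ∘ₗ b ∘ₗ Q - Qa ∘ₗ b ∘ₗ B ∘ₗ b ∘ₗ Q)
          + Qa ∘ₗ b ∘ₗ B ∘ₗ b ∘ₗ Q)) ∘ₗ S := by rw [sub_add_cancel]
    _ = (Sy ∘ₗ (M + Qa ∘ₗ b ∘ₗ Q - Qa ∘ₗ b ∘ₗ B ∘ₗ b ∘ₗ Q)
          + Sy ∘ₗ (Qa ∘ₗ b ∘ₗ B ∘ₗ b ∘ₗ Q)) ∘ₗ S := by rw [LinearMap.comp_add]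
    _ = (LinearMap.id + Sy ∘ₗ (Qa ∘ₗ b ∘ₗ B ∘ₗ b ∘ₗ Q)) ∘ₗ S := by rw [hSy2]
    _ = S + Sy ∘ₗ (Qa ∘ₗ b ∘ₗ B ∘ₗ b ∘ₗ Q) ∘ₗ S := by
          rw [LinearMap.add_comp, LinearMap.id_comp, LinearMap.comp_assoc]
  constructor
  · rw [hDE]
    simp only [LinearMap.sub_comp, LinearMap.comp_add, LinearMap.add_comp,
      LinearMap.comp_sub, LinearMap.comp_assoc]
    have e1 : b ∘ₗ B + E ∘ₗ B = LinearMap.id := by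
      rw [← hB1, LinearMap.add_comp]
    have e2 : b ∘ₗ B ∘ₗ b ∘ₗ Q ∘ₗ Sy ∘ₗ Qa ∘ₗ b ∘ₗ B
        + E ∘ₗ B ∘ₗ b ∘ₗ Q ∘ₗ Sy ∘ₗ Qa ∘ₗ b ∘ₗ B
        = b ∘ₗ Q ∘ₗ Sy ∘ₗ Qa ∘ₗ b ∘ₗ B := by
      have h := congrArg (fun f => f ∘ₗ (b ∘ₗ Q ∘ₗ Sy ∘ₗ Qa ∘ₗ b ∘ₗ B)) hB1
      simpa only [LinearMap.add_comp, LinearMap.comp_assoc, LinearMap.id_comp] using h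
    have e3 : b ∘ₗ Q ∘ₗ S ∘ₗ Qa ∘ₗ b ∘ₗ B
        + b ∘ₗ Q ∘ₗ S ∘ₗ Qa ∘ₗ b ∘ₗ B ∘ₗ b ∘ₗ Q ∘ₗ Sy ∘ₗ Qa ∘ₗ b ∘ₗ B
        = b ∘ₗ Q ∘ₗ Sy ∘ₗ Qa ∘ₗ b ∘ₗ B := by
      have h := congrArg
        (fun f => (b ∘ₗ Q) ∘ₗ f ∘ₗ (Qa ∘ₗ b ∘ₗ B)) hKey1.symm
      simpa only [LinearMap.add_comp, LinearMap.comp_add, LinearMap.comp_assoc] using h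
    calc b ∘ₗ B + E ∘ₗ B - b ∘ₗ Q ∘ₗ S ∘ₗ Qa ∘ₗ b ∘ₗ B +
          (b ∘ₗ B ∘ₗ b ∘ₗ Q ∘ₗ Sy ∘ₗ Qa ∘ₗ b ∘ₗ B
            + E ∘ₗ B ∘ₗ b ∘ₗ Q ∘ₗ Sy ∘ₗ Qa ∘ₗ b ∘ₗ B -
            b ∘ₗ Q ∘ₗ S ∘ₗ Qa ∘ₗ b ∘ₗ B ∘ₗ b ∘ₗ Q ∘ₗ Sy ∘ₗ Qa ∘ₗ b ∘ₗ B)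
        = (b ∘ₗ B + E ∘ₗ B)
          + ((b ∘ₗ B ∘ₗ b ∘ₗ Q ∘ₗ Sy ∘ₗ Qa ∘ₗ b ∘ₗ B
              + E ∘ₗ B ∘ₗ b ∘ₗ Q ∘ₗ Sy ∘ₗ Qa ∘ₗ b ∘ₗ B)
            - (b ∘ₗ Q ∘ₗ S ∘ₗ Qa ∘ₗ b ∘ₗ B
              + b ∘ₗ Q ∘ₗ S ∘ₗ Qa ∘ₗ b ∘ₗ B ∘ₗ b ∘ₗ Q ∘ₗ Sy ∘ₗ Qa ∘ₗ b ∘ₗ B)) := by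
          abel
      _ = LinearMap.id := by rw [e1, e2, e3]; abel
  · rw [hDE]
    simp only [LinearMap.sub_comp, LinearMap.comp_add, LinearMap.add_comp,
      LinearMap.comp_sub, LinearMap.comp_assoc]
    have e1 : B ∘ₗ b + B ∘ₗ E = LinearMap.id := by
      rw [← hB2, LinearMap.comp_add]
    have e2 : B ∘ₗ b ∘ₗ Q ∘ₗ Sy ∘ₗ Qa ∘ₗ b ∘ₗ B ∘ₗ b
        + B ∘ₗ b ∘ₗ Q ∘ₗ Sy ∘ₗ Qa ∘ₗ b ∘ₗ B ∘ₗ E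
        = B ∘ₗ b ∘ₗ Q ∘ₗ Sy ∘ₗ Qa ∘ₗ b := by
      have h := congrArg (fun f => (B ∘ₗ b ∘ₗ Q ∘ₗ Sy ∘ₗ Qa ∘ₗ b) ∘ₗ f) hB2
      simpa only [LinearMap.comp_add, LinearMap.comp_assoc, LinearMap.comp_id] using h
    have e3 : B ∘ₗ b ∘ₗ Q ∘ₗ S ∘ₗ Qa ∘ₗ b
        + B ∘ₗ b ∘ₗ Q ∘ₗ Sy ∘ₗ Qa ∘ₗ b ∘ₗ B ∘ₗ b ∘ₗ Q ∘ₗ S ∘ₗ Qa ∘ₗ b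
        = B ∘ₗ b ∘ₗ Q ∘ₗ Sy ∘ₗ Qa ∘ₗ b := by
      have h := congrArg
        (fun f => (B ∘ₗ b ∘ₗ Q) ∘ₗ f ∘ₗ (Qa ∘ₗ b)) hKey2.symm
      simpa only [LinearMap.add_comp, LinearMap.comp_add, LinearMap.comp_assoc] using h
    calc B ∘ₗ b + B ∘ₗ b ∘ₗ Q ∘ₗ Sy ∘ₗ Qa ∘ₗ b ∘ₗ B ∘ₗ b
          + (B ∘ₗ E + B ∘ₗ b ∘ₗ Q ∘ₗ Sy ∘ₗ Qa ∘ₗ b ∘ₗ B ∘ₗ E) -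
          (B ∘ₗ b ∘ₗ Q ∘ₗ S ∘ₗ Qa ∘ₗ b
            + B ∘ₗ b ∘ₗ Q ∘ₗ Sy ∘ₗ Qa ∘ₗ b ∘ₗ B ∘ₗ b ∘ₗ Q ∘ₗ S ∘ₗ Qa ∘ₗ b)
        = (B ∘ₗ b + B ∘ₗ E)
          + ((B ∘ₗ b ∘ₗ Q ∘ₗ Sy ∘ₗ Qa ∘ₗ b ∘ₗ B ∘ₗ b
              + B ∘ₗ b ∘ₗ Q ∘ₗ Sy ∘ₗ Qa ∘ₗ b ∘ₗ B ∘ₗ E)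
            - (B ∘ₗ b ∘ₗ Q ∘ₗ S ∘ₗ Qa ∘ₗ b
              + B ∘ₗ b ∘ₗ Q ∘ₗ Sy ∘ₗ Qa ∘ₗ b ∘ₗ B ∘ₗ b ∘ₗ Q ∘ₗ S ∘ₗ Qa ∘ₗ b)) := by
          abel
      _ = LinearMap.id := by rw [e1, e2, e3]; abel


/-- Dual Woodbury identity: with `B = (b+E)⁻¹`, `S = (M + Q*bQ)⁻¹`,
`D = b − bQSQ*b`, and `S_y = (M + Q*bQ − Q*bBbQ)⁻¹`, the operator `D + E` is
invertible with inverse `B + B bQ S_y Q* b B`. -/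
theorem stmt_5 {V W : Type*}
    [NormedAddCommGroup V] [InnerProductSpace ℂ V] [FiniteDimensional ℂ V]
    [NormedAddCommGroup W] [InnerProductSpace ℂ W] [FiniteDimensional ℂ W]
    (M : V →ₗ[ℂ] V) (E : W →ₗ[ℂ] W) (Q : V →ₗ[ℂ] W) (b : W →ₗ[ℂ] W)
    (hb : IsUnit b)
    (B : W →ₗ[ℂ] W)
    (hB1 : (b + E) ∘ₗ B = LinearMap.id) (hB2 : B ∘ₗ (b + E) = LinearMap.id)
    (S : V →ₗ[ℂ] V)
    (hS1 : (M + LinearMap.adjoint Q ∘ₗ b ∘ₗ Q) ∘ₗ S = LinearMap.id)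
    (hS2 : S ∘ₗ (M + LinearMap.adjoint Q ∘ₗ b ∘ₗ Q) = LinearMap.id)
    (D : W →ₗ[ℂ] W)
    (hD : D = b - b ∘ₗ Q ∘ₗ S ∘ₗ LinearMap.adjoint Q ∘ₗ b)
    (Sy : V →ₗ[ℂ] V)
    (hSy1 : (M + LinearMap.adjoint Q ∘ₗ b ∘ₗ Q
        - LinearMap.adjoint Q ∘ₗ b ∘ₗ B ∘ₗ b ∘ₗ Q) ∘ₗ Sy = LinearMap.id)
    (hSy2 : Sy ∘ₗ (M + LinearMap.adjoint Q ∘ₗ b ∘ₗ Q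
        - LinearMap.adjoint Q ∘ₗ b ∘ₗ B ∘ₗ b ∘ₗ Q) = LinearMap.id) :
    (D + E) ∘ₗ (B + B ∘ₗ b ∘ₗ Q ∘ₗ Sy ∘ₗ LinearMap.adjoint Q ∘ₗ b ∘ₗ B)
      = LinearMap.id ∧
    (B + B ∘ₗ b ∘ₗ Q ∘ₗ Sy ∘ₗ LinearMap.adjoint Q ∘ₗ b ∘ₗ B) ∘ₗ (D + E)
      = LinearMap.id := by
  exact woodbury_aux M E Q (LinearMap.adjoint Q) b B hB1 hB2 S hS1 hS2 D hD Sy hSy1 hSy2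
end

section
/- For every real x > 0 and every real R₀ > 0, log x = x ∫_{R₀}^∞ dy/(y(x + iy)) − i ∫_0^{R₀} dy/(x + iy) + log R₀ + iπ/2, where both integrals are convergent complex-valued integrals and log denotes the real logarithm on the left and the principal branch inside the computation. -/
open MeasureTheory

/-- Resolvent representation of the logarithm: for `x > 0` and `R₀ > 0`,
`log x = x ∫_{R₀}^∞ dy/(y(x + iy)) − i ∫_0^{R₀} dy/(x + iy) + log R₀ + iπ/2`,
and the improper integral converges. -/
theorem stmt_7 (x R₀ : ℝ) (hx : 0 < x) (hR : 0 < R₀) :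
    IntegrableOn (fun y : ℝ => 1 / ((y : ℂ) * ((x : ℂ) + Complex.I * (y : ℂ))))
      (Set.Ioi R₀) ∧
    (Real.log x : ℂ) =
      (x : ℂ) * (∫ y in Set.Ioi R₀, 1 / ((y : ℂ) * ((x : ℂ) + Complex.I * (y : ℂ))))
        - Complex.I * (∫ y in (0 : ℝ)..R₀, 1 / ((x : ℂ) + Complex.I * (y : ℂ)))
        + (Real.log R₀ : ℂ) + Complex.I * Real.pi / 2 := by
  open Set Complex Filter Topology in
  -- basic nonvanishing facts
  have hne : ∀ y : ℝ, (x : ℂ) + Complex.I * y ≠ 0 := by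
    intro y h
    have : ((x : ℂ) + Complex.I * y).re = 0 := by rw [h]; simp
    simp [Complex.add_re, Complex.mul_re] at this
    linarith
  have hslit : ∀ y : ℝ, (x : ℂ) + Complex.I * y ∈ Complex.slitPlane := by
    intro y
    rw [Complex.mem_slitPlane_iff]
    left
    simp [Complex.add_re, Complex.mul_re]
    exact hx
  -- integrability on (R₀, ∞)
  have hcont : ContinuousOn (fun y : ℝ => 1 / ((y : ℂ) * ((x : ℂ) + Complex.I * y)))
      (Set.Ioi R₀) := by
    apply ContinuousOn.div continuousOn_const
    · fun_prop
    · intro y hy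
      exact mul_ne_zero (Complex.ofReal_ne_zero.2 (ne_of_gt (hR.trans hy))) (hne y)
  have hint : IntegrableOn (fun y : ℝ => 1 / ((y : ℂ) * ((x : ℂ) + Complex.I * y)))
      (Set.Ioi R₀) := by
    have hg : IntegrableOn (fun y : ℝ => y ^ (-2 : ℝ)) (Set.Ioi R₀) :=
      integrableOn_Ioi_rpow_of_lt (by norm_num) hR
    refine Integrable.mono hg (hcont.aestronglyMeasurable measurableSet_Ioi) ?_
    refine (ae_restrict_iff' measurableSet_Ioi).2 (Filter.Eventually.of_forall fun y hy => ?_)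
    have hy0 : 0 < y := hR.trans hy
    have h1 : y ≤ ‖(x : ℂ) + Complex.I * y‖ := by
      have := Complex.abs_im_le_norm ((x : ℂ) + Complex.I * y)
      simpa [Complex.add_im, Complex.mul_im, abs_of_pos hy0] using this
    have h2 : ‖(1 : ℂ) / ((y : ℂ) * ((x : ℂ) + Complex.I * y))‖
        = 1 / (y * ‖(x : ℂ) + Complex.I * y‖) := by
      simp [Complex.norm_real, abs_of_pos hy0]
    rw [h2]
    have h3 : ‖y ^ (-2 : ℝ)‖ = 1 / (y * y) := by
      rw [Real.norm_eq_abs, _root_.abs_of_nonneg (Real.rpow_nonneg hy0.le _)]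
      rw [Real.rpow_neg hy0.le, show (2:ℝ) = ((2:ℕ):ℝ) by norm_num, Real.rpow_natCast]
      rw [one_div, sq]
    rw [h3]
    apply div_le_div_of_nonneg_left one_pos.le (by positivity)
    exact mul_le_mul_of_nonneg_left h1 hy0.le
  refine ⟨hint, ?_⟩
  -- derivative facts
  have hdin : ∀ y : ℝ, HasDerivAt (fun y : ℝ => (x : ℂ) + Complex.I * y) Complex.I y := by
    intro y
    have h1 : HasDerivAt (fun y : ℝ => (y : ℂ)) 1 y := by
      exact (hasDerivAt_id y).ofReal_comp
    simpa using (h1.const_mul Complex.I).const_add (x : ℂ)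
  have hd1 : ∀ y : ℝ, HasDerivAt (fun y : ℝ => Complex.log ((x : ℂ) + Complex.I * y))
      (Complex.I / ((x : ℂ) + Complex.I * y)) y := by
    intro y
    have := (Complex.hasDerivAt_log (hslit y)).comp y (hdin y)
    simpa [Function.comp_def, div_eq_inv_mul] using this
  have hd2 : ∀ y : ℝ, 0 < y → HasDerivAt (fun y : ℝ => Complex.log (y : ℂ))
      (((y : ℂ))⁻¹) y := by
    intro y hy
    have h1 : HasDerivAt (fun y : ℝ => (y : ℂ)) 1 y := by
      exact (hasDerivAt_id y).ofReal_comp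
    have hsl : (y : ℂ) ∈ Complex.slitPlane := by
      rw [Complex.mem_slitPlane_iff]; left; simpa using hy
    have := (Complex.hasDerivAt_log hsl).comp y h1
    simpa [Function.comp_def] using this
  set F : ℝ → ℂ := fun y => Complex.log (y : ℂ) - Complex.log ((x : ℂ) + Complex.I * y) with hF
  have hderiv : ∀ y ∈ Set.Ioi R₀, HasDerivAt F
      ((x : ℂ) * (1 / ((y : ℂ) * ((x : ℂ) + Complex.I * y)))) y := by
    intro y hy
    have hy0 : 0 < y := hR.trans hy
    have := (hd2 y hy0).sub (hd1 y)
    refine this.congr_deriv ?_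
    have hyC : (y : ℂ) ≠ 0 := Complex.ofReal_ne_zero.2 (ne_of_gt hy0)
    have hp : (y : ℂ) * ((x : ℂ) + Complex.I * y) ≠ 0 := mul_ne_zero hyC (hne y)
    rw [inv_eq_one_div, div_sub_div _ _ hyC (hne y), mul_one_div, div_eq_div_iff hp hp]
    ring
  have hcontF : ContinuousWithinAt F (Set.Ici R₀) R₀ :=
    (((hd2 R₀ hR).sub (hd1 R₀)).continuousAt).continuousWithinAt
  have hF_tendsto : Filter.Tendsto F Filter.atTop
      (nhds (-(((Real.pi : ℂ)) / 2 * Complex.I))) := by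
    have h1 : Filter.Tendsto (fun y : ℝ => ((x / y : ℝ) : ℂ) + Complex.I) Filter.atTop
        (nhds Complex.I) := by
      have h0 : Filter.Tendsto (fun y : ℝ => x / y) Filter.atTop (nhds 0) :=
        Filter.Tendsto.div_atTop tendsto_const_nhds Filter.tendsto_id
      have := (Complex.continuous_ofReal.continuousAt.tendsto.comp h0).add_const Complex.I
      simpa using this
    have hIsl : Complex.I ∈ Complex.slitPlane := by
      rw [Complex.mem_slitPlane_iff]; right; simp
    have h2 : Filter.Tendsto (fun y : ℝ => -Complex.log (((x / y : ℝ) : ℂ) + Complex.I))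
        Filter.atTop (nhds (-(((Real.pi : ℂ)) / 2 * Complex.I))) := by
      have := ((continuousAt_clog hIsl).tendsto.comp h1).neg
      rwa [Complex.log_I] at this
    refine h2.congr' ?_
    filter_upwards [Filter.eventually_gt_atTop (0 : ℝ)] with y hy
    have hw : (((x / y : ℝ) : ℂ) + Complex.I) ≠ 0 := by
      intro h
      have := congrArg Complex.im h
      simp at this
    have hprod : (x : ℂ) + Complex.I * y = (y : ℝ) * (((x / y : ℝ) : ℂ) + Complex.I) := by
      have hyC : (y : ℂ) ≠ 0 := Complex.ofReal_ne_zero.2 (ne_of_gt hy)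
      push_cast
      rw [mul_add, mul_div_cancel₀ _ hyC]
      ring
    rw [hF]
    simp only
    rw [hprod, Complex.log_ofReal_mul hy hw, ← Complex.ofReal_log hy.le]
    ring
  have key : (∫ y in Set.Ioi R₀, (x : ℂ) * (1 / ((y : ℂ) * ((x : ℂ) + Complex.I * y))))
      = (-(((Real.pi : ℂ)) / 2 * Complex.I)) - F R₀ :=
    MeasureTheory.integral_Ioi_of_hasDerivAt_of_tendsto hcontF hderiv
      (hint.const_mul (x : ℂ)) hF_tendsto
  rw [MeasureTheory.integral_const_mul] at key
  have hkey2 : (∫ y in (0 : ℝ)..R₀, 1 / ((x : ℂ) + Complex.I * y)) =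
      (-Complex.I) * Complex.log ((x : ℂ) + Complex.I * R₀)
        - (-Complex.I) * Complex.log ((x : ℂ) + Complex.I * (0 : ℝ)) := by
    apply intervalIntegral.integral_eq_sub_of_hasDerivAt
      (f := fun y : ℝ => (-Complex.I) * Complex.log ((x : ℂ) + Complex.I * y))
    · intro y _
      have := (hd1 y).const_mul (-Complex.I)
      refine this.congr_deriv ?_
      rw [mul_div_assoc', neg_mul, Complex.I_mul_I, neg_neg]
    · apply Continuous.intervalIntegrable
      exact continuous_const.div (by fun_prop) (fun y => hne y)
  rw [key, hkey2, hF]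
  simp only [Complex.ofReal_zero, mul_zero, add_zero]
  rw [← Complex.ofReal_log hx.le, ← Complex.ofReal_log hR.le]
  ring_nf
  rw [Complex.I_sq]
  ring
end

section
/- (Axial gauge bound, one scale.) Let L be a positive integer and consider the lattice ℤ³ partitioned into blocks B(y) of side L centered at points y ∈ (Lℤ)³. Let A be a real antisymmetric function on bonds of ℤ³. Assume the (unsymmetrized) axial gauge condition: A(Γ(y,x)) = 0 for every block center y and every x ∈ B(y), where Γ(y,x) is the rectilinear path from y to x changing coordinates in standard order and A(Γ) = Σ_{b∈Γ} A(b). Define (𝒬A)(y, y+Le_μ) = L⁻³ Σ_{x∈B(y)} A(Γ(x, x+Le_μ)), where Γ(x, x+Le_μ) is the straight path of L bonds. Then there is a constant c₀ = O(1), independent of L and A, such that for every bond b of ℤ³: |A(b)| ≤ c₀ L² ‖dA‖_∞ + L ‖𝒬A‖_∞. -/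
/-- The unit step of ℤ³ in direction `μ`. -/
def estep (μ : Fin 3) : Fin 3 → ℤ := fun i => if i = μ then 1 else 0

/-- Signed sum of the antisymmetric bond function `A` over the straight segment
of `|n|` unit bonds starting at `p` in direction `μ` (oriented by the sign of `n`). -/
noncomputable def lineSum (A : (Fin 3 → ℤ) → (Fin 3 → ℤ) → ℝ)
    (p : Fin 3 → ℤ) (μ : Fin 3) (n : ℤ) : ℝ :=
  if 0 ≤ n then
    ∑ i ∈ Finset.range n.toNat,
      A (fun j => p j + (i : ℤ) * estep μ j) (fun j => p j + ((i : ℤ) + 1) * estep μ j)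
  else
    ∑ i ∈ Finset.range (-n).toNat,
      A (fun j => p j - (i : ℤ) * estep μ j) (fun j => p j - ((i : ℤ) + 1) * estep μ j)

/-- Sum of `A` over the rectilinear path from `u` to `v` changing coordinates
in standard order (first coordinate 0, then 1, then 2). -/
noncomputable def pathSum (A : (Fin 3 → ℤ) → (Fin 3 → ℤ) → ℝ) (u v : Fin 3 → ℤ) : ℝ :=
  lineSum A u 0 (v 0 - u 0)
    + lineSum A (fun i => if i = 0 then v 0 else u i) 1 (v 1 - u 1)
    + lineSum A (fun i => if i = 2 then u 2 else v i) 2 (v 2 - u 2)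

/-- Value of `dA` on the unit plaquette at `x` in the `(μ,ν)` plane. -/
noncomputable def plaq (A : (Fin 3 → ℤ) → (Fin 3 → ℤ) → ℝ) (x : Fin 3 → ℤ)
    (μ ν : Fin 3) : ℝ :=
  A x (fun j => x j + estep μ j)
    + A (fun j => x j + estep μ j) (fun j => x j + estep μ j + estep ν j)
    + A (fun j => x j + estep μ j + estep ν j) (fun j => x j + estep ν j)
    + A (fun j => x j + estep ν j) x

/-- The block-averaging operator
`(𝒬A)(y, y+Le_μ) = L⁻³ Σ_{x∈B(y)} A(Γ(x, x+Le_μ))` where the block `B(y)` of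
side `L` is indexed by the coarse site `Y` (fine base point `LY`) and
`Γ(x, x+Le_μ)` is the straight path of `L` bonds. -/
noncomputable def Qavg (L : ℕ) (A : (Fin 3 → ℤ) → (Fin 3 → ℤ) → ℝ)
    (Y : Fin 3 → ℤ) (μ : Fin 3) : ℝ :=
  ((L : ℝ) ^ 3)⁻¹ * ∑ v : Fin 3 → Fin L,
    lineSum A (fun i => (L : ℤ) * Y i + (v i : ℤ)) μ (L : ℤ)

namespace Stmt10

/-- shifted point -/
def sh (p : Fin 3 → ℤ) (μ : Fin 3) (n : ℤ) : Fin 3 → ℤ := fun j => p j + n * estep μ j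

lemma sh_zero (p : Fin 3 → ℤ) (μ : Fin 3) : sh p μ 0 = p := by
  funext j; simp [sh]

lemma sh_sh (p : Fin 3 → ℤ) (μ : Fin 3) (a b : ℤ) : sh (sh p μ a) μ b = sh p μ (a + b) := by
  funext j; simp [sh]; ring

lemma sh_comm (p : Fin 3 → ℤ) (μ ν : Fin 3) (a b : ℤ) :
    sh (sh p μ a) ν b = sh (sh p ν b) μ a := by
  funext j; simp [sh]; ring

/-- line sum with natural length -/
noncomputable def lineN (A : (Fin 3 → ℤ) → (Fin 3 → ℤ) → ℝ)
    (p : Fin 3 → ℤ) (μ : Fin 3) (n : ℕ) : ℝ :=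
  ∑ i ∈ Finset.range n, A (sh p μ (i : ℤ)) (sh p μ ((i : ℤ) + 1))

lemma lineSum_natCast (A : (Fin 3 → ℤ) → (Fin 3 → ℤ) → ℝ) (p : Fin 3 → ℤ) (μ : Fin 3)
    (n : ℕ) : lineSum A p μ (n : ℤ) = lineN A p μ n := by
  rw [lineSum, if_pos (by positivity), Int.toNat_natCast]
  rfl

lemma lineN_zero (A : (Fin 3 → ℤ) → (Fin 3 → ℤ) → ℝ) (p : Fin 3 → ℤ) (μ : Fin 3) :
    lineN A p μ 0 = 0 := by simp [lineN]

lemma lineN_succ (A : (Fin 3 → ℤ) → (Fin 3 → ℤ) → ℝ) (p : Fin 3 → ℤ) (μ : Fin 3) (n : ℕ) :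
    lineN A p μ (n + 1) = lineN A p μ n + A (sh p μ (n : ℤ)) (sh (sh p μ (n : ℤ)) μ 1) := by
  rw [lineN, Finset.sum_range_succ, sh_sh]; rfl

lemma lineN_one (A : (Fin 3 → ℤ) → (Fin 3 → ℤ) → ℝ) (p : Fin 3 → ℤ) (μ : Fin 3) :
    lineN A p μ 1 = A p (sh p μ 1) := by
  rw [show (1:ℕ) = 0 + 1 from rfl, lineN_succ, lineN_zero]
  simp [sh_zero]

lemma lineN_add (A : (Fin 3 → ℤ) → (Fin 3 → ℤ) → ℝ) (p : Fin 3 → ℤ) (μ : Fin 3) (m n : ℕ) :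
    lineN A p μ (m + n) = lineN A p μ m + lineN A (sh p μ (m : ℤ)) μ n := by
  induction n with
  | zero => simp [lineN_zero]
  | succ n ih =>
      rw [← Nat.add_assoc, lineN_succ, ih, lineN_succ, sh_sh, sh_sh, sh_sh]
      push_cast
      ring_nf

lemma plaq_eq (A : (Fin 3 → ℤ) → (Fin 3 → ℤ) → ℝ) (x : Fin 3 → ℤ) (μ ν : Fin 3) :
    plaq A x μ ν = A x (sh x μ 1) + A (sh x μ 1) (sh (sh x μ 1) ν 1)
      + A (sh (sh x μ 1) ν 1) (sh x ν 1) + A (sh x ν 1) x := by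
  have h1 : (fun j => x j + estep μ j) = sh x μ 1 := by funext j; simp [sh]
  have h2 : (fun j => x j + estep μ j + estep ν j) = sh (sh x μ 1) ν 1 := by
    funext j; simp [sh]
  have h3 : (fun j => x j + estep ν j) = sh x ν 1 := by funext j; simp [sh]
  rw [plaq, h1, h2, h3]


lemma strip (A : (Fin 3 → ℤ) → (Fin 3 → ℤ) → ℝ) (hA : ∀ x y, A x y = - A y x)
    (p : Fin 3 → ℤ) (μ ν : Fin 3) (m : ℕ) :
    lineN A p μ m + A (sh p μ (m : ℤ)) (sh (sh p μ (m : ℤ)) ν 1)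
      = A p (sh p ν 1) + lineN A (sh p ν 1) μ m
        + ∑ i ∈ Finset.range m, plaq A (sh p μ (i : ℤ)) μ ν := by
  induction m with
  | zero => simp [lineN_zero, sh_zero]
  | succ m ih =>
      rw [lineN_succ, lineN_succ, Finset.sum_range_succ, plaq_eq]
      have e1 : sh p μ ((m+1 : ℕ) : ℤ) = sh (sh p μ (m : ℤ)) μ 1 := by
        rw [sh_sh]; push_cast; ring_nf
      have e2 : sh (sh p ν 1) μ (m : ℤ) = sh (sh p μ (m : ℤ)) ν 1 := sh_comm _ _ _ _ _
      rw [e1, e2]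
      set x := sh p μ (m : ℤ)
      have h1 := hA (sh (sh x μ 1) ν 1) (sh x ν 1)
      have h2 := hA (sh x ν 1) x
      have e3 : sh (sh x ν 1) μ 1 = sh (sh x μ 1) ν 1 := sh_comm _ _ _ _ _
      rw [e3]
      linarith [ih]

lemma rect (A : (Fin 3 → ℤ) → (Fin 3 → ℤ) → ℝ) (hA : ∀ x y, A x y = - A y x)
    (p : Fin 3 → ℤ) (μ ν : Fin 3) (m n : ℕ) :
    lineN A p μ m + lineN A (sh p μ (m : ℤ)) ν n
      = lineN A p ν n + lineN A (sh p ν (n : ℤ)) μ m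
        + ∑ j ∈ Finset.range n, ∑ i ∈ Finset.range m,
            plaq A (sh (sh p ν (j : ℤ)) μ (i : ℤ)) μ ν := by
  induction n with
  | zero => simp [lineN_zero, sh_zero]
  | succ n ih =>
      rw [lineN_succ, lineN_succ, Finset.sum_range_succ]
      have hs := strip A hA (sh p ν (n : ℤ)) μ ν m
      have e1 : sh (sh p ν (n : ℤ)) ν 1 = sh p ν ((n+1 : ℕ) : ℤ) := by
        rw [sh_sh]; push_cast; ring_nf
      have e2 : sh (sh p ν (n : ℤ)) μ (m : ℤ) = sh (sh p μ (m : ℤ)) ν (n : ℤ) :=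
        sh_comm _ _ _ _ _
      rw [e1, e2] at hs
      rw [e1]
      linarith [ih]


lemma plaq_sum_bound (A : (Fin 3 → ℤ) → (Fin 3 → ℤ) → ℝ) {F : ℝ}
    (hF : ∀ x μ ν, |plaq A x μ ν| ≤ F)
    (p : Fin 3 → ℤ) (μ ν : Fin 3) (m n : ℕ) :
    |∑ j ∈ Finset.range n, ∑ i ∈ Finset.range m,
        plaq A (sh (sh p ν (j : ℤ)) μ (i : ℤ)) μ ν| ≤ (n : ℝ) * m * F := by
  calc |∑ j ∈ Finset.range n, ∑ i ∈ Finset.range m,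
        plaq A (sh (sh p ν (j : ℤ)) μ (i : ℤ)) μ ν|
      ≤ ∑ j ∈ Finset.range n, |∑ i ∈ Finset.range m,
          plaq A (sh (sh p ν (j : ℤ)) μ (i : ℤ)) μ ν| := Finset.abs_sum_le_sum_abs _ _
    _ ≤ ∑ j ∈ Finset.range n, ((m : ℝ) * F) := by
        refine Finset.sum_le_sum fun j _ => ?_
        calc |∑ i ∈ Finset.range m, plaq A (sh (sh p ν (j : ℤ)) μ (i : ℤ)) μ ν|
            ≤ ∑ i ∈ Finset.range m, |plaq A (sh (sh p ν (j : ℤ)) μ (i : ℤ)) μ ν| :=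
              Finset.abs_sum_le_sum_abs _ _
          _ ≤ ∑ i ∈ Finset.range m, F := Finset.sum_le_sum fun i _ => hF _ _ _
          _ = (m : ℝ) * F := by simp [mul_comm]
    _ = (n : ℝ) * m * F := by simp [mul_assoc, mul_comm]

lemma gauge' {L : ℕ} {A : (Fin 3 → ℤ) → (Fin 3 → ℤ) → ℝ}
    (hg : ∀ (Y : Fin 3 → ℤ) (v : Fin 3 → Fin L),
      pathSum A (fun i => (L : ℤ) * Y i) (fun i => (L : ℤ) * Y i + (v i : ℤ)) = 0)
    (Y : Fin 3 → ℤ) (a b c : ℕ) (ha : a < L) (hb : b < L) (hc : c < L) :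
    lineN A (fun i => (L : ℤ) * Y i) 0 a
      + lineN A (sh (fun i => (L : ℤ) * Y i) 0 (a : ℤ)) 1 b
      + lineN A (sh (sh (fun i => (L : ℤ) * Y i) 0 (a : ℤ)) 1 (b : ℤ)) 2 c = 0 := by
  have h := hg Y ![⟨a, ha⟩, ⟨b, hb⟩, ⟨c, hc⟩]
  set y : Fin 3 → ℤ := fun i => (L : ℤ) * Y i with hy
  simp only [pathSum] at h
  have hv0 : ((![(⟨a, ha⟩ : Fin L), ⟨b, hb⟩, ⟨c, hc⟩]) 0 : ℤ) = (a : ℤ) := rfl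
  have hv1 : ((![(⟨a, ha⟩ : Fin L), ⟨b, hb⟩, ⟨c, hc⟩]) 1 : ℤ) = (b : ℤ) := rfl
  have hv2 : ((![(⟨a, ha⟩ : Fin L), ⟨b, hb⟩, ⟨c, hc⟩]) 2 : ℤ) = (c : ℤ) := rfl
  rw [hv0, hv1, hv2] at h
  have e0 : y 0 + (a : ℤ) - y 0 = (a : ℤ) := by ring
  have e1 : y 1 + (b : ℤ) - y 1 = (b : ℤ) := by ring
  have e2 : y 2 + (c : ℤ) - y 2 = (c : ℤ) := by ring
  rw [e0, e1, e2] at h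
  have p1 : (fun i => if i = 0 then y 0 + (a : ℤ) else y i) = sh y 0 (a : ℤ) := by
    funext j; fin_cases j <;> simp [sh, estep]
  have p2 : (fun i => if i = 2 then y 2 else
      y i + ((![(⟨a, ha⟩ : Fin L), ⟨b, hb⟩, ⟨c, hc⟩]) i : ℤ)) = sh (sh y 0 (a : ℤ)) 1 (b : ℤ) := by
    funext j; fin_cases j <;> simp [sh, estep, hv0, hv1]
  rw [p1, p2, lineSum_natCast, lineSum_natCast, lineSum_natCast] at h
  exact h


/-- base point of a block plus nonneg offsets -/
def pt (L : ℕ) (Y : Fin 3 → ℤ) (a b c : ℕ) : Fin 3 → ℤ :=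
  sh (sh (sh (fun i => (L : ℤ) * Y i) 0 (a : ℤ)) 1 (b : ℤ)) 2 (c : ℤ)

lemma interior_bond {L : ℕ} {A : (Fin 3 → ℤ) → (Fin 3 → ℤ) → ℝ}
    (hA : ∀ x y, A x y = - A y x)
    (hg : ∀ (Y : Fin 3 → ℤ) (v : Fin 3 → Fin L),
      pathSum A (fun i => (L : ℤ) * Y i) (fun i => (L : ℤ) * Y i + (v i : ℤ)) = 0)
    {F : ℝ} (hF : ∀ x μ ν, |plaq A x μ ν| ≤ F) (hF0 : 0 ≤ F)
    (Y : Fin 3 → ℤ) (μ : Fin 3) (a b c : ℕ)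
    (ha : a < L) (hb : b < L) (hc : c < L) (hμ : (![a, b, c] : Fin 3 → ℕ) μ + 1 < L) :
    |A (pt L Y a b c) (sh (pt L Y a b c) μ 1)| ≤ 2 * (L : ℝ) * F := by
  set y : Fin 3 → ℤ := fun i => (L : ℤ) * Y i with hy
  set r : Fin 3 → ℤ := sh y 0 (a : ℤ) with hr
  set q : Fin 3 → ℤ := sh r 1 (b : ℤ) with hq
  have hx : pt L Y a b c = sh q 2 (c : ℤ) := rfl
  set x : Fin 3 → ℤ := sh q 2 (c : ℤ) with hxx
  rw [hx]
  have hG0 := gauge' hg Y a b c ha hb hc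
  have hbL : (b : ℝ) ≤ (L : ℝ) := by exact_mod_cast hb.le
  have hcL : (c : ℝ) ≤ (L : ℝ) := by exact_mod_cast hc.le
  fin_cases μ
  · -- μ = 0
    show |A x (sh x 0 1)| ≤ 2 * (L : ℝ) * F
    have hμ' : a + 1 < L := by simpa using hμ
    have hG1 := gauge' hg Y (a + 1) b c hμ' hb hc
    rw [lineN_succ] at hG1
    rw [show sh y 0 ((a + 1 : ℕ) : ℤ) = sh r 0 1 by rw [hr, sh_sh]; norm_cast] at hG1
    have R1 := rect A hA r 0 1 1 b
    rw [lineN_one, lineN_one, Nat.cast_one] at R1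
    have R2 := rect A hA q 0 2 1 c
    rw [lineN_one, lineN_one, Nat.cast_one] at R2
    rw [show sh (sh r 0 1) 1 (b : ℤ) = sh q 0 1 by rw [sh_comm]] at hG1
    have hX : A x (sh x 0 1)
        = - (∑ j ∈ Finset.range b, ∑ i ∈ Finset.range 1,
              plaq A (sh (sh r 1 (j : ℤ)) 0 (i : ℤ)) 0 1)
          - (∑ j ∈ Finset.range c, ∑ i ∈ Finset.range 1,
              plaq A (sh (sh q 2 (j : ℤ)) 0 (i : ℤ)) 0 2) := by linarith
    have B1 := plaq_sum_bound A hF r 0 1 1 b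
    have B2 := plaq_sum_bound A hF q 0 2 1 c
    rw [hX]
    calc |_ - _| ≤ _ := abs_sub _ _
      _ ≤ 2 * (L : ℝ) * F := by
          rw [abs_neg] at *
          push_cast at B1 B2 ⊢
          nlinarith
  · -- μ = 1
    show |A x (sh x 1 1)| ≤ 2 * (L : ℝ) * F
    have hμ' : b + 1 < L := by simpa using hμ
    have hG1 := gauge' hg Y a (b + 1) c ha hμ' hc
    rw [lineN_succ] at hG1
    rw [show sh r 1 ((b + 1 : ℕ) : ℤ) = sh q 1 1 by rw [hq, sh_sh]; norm_cast] at hG1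
    have R := rect A hA q 1 2 1 c
    rw [lineN_one, lineN_one, Nat.cast_one] at R
    have hX : A x (sh x 1 1)
        = - (∑ j ∈ Finset.range c, ∑ i ∈ Finset.range 1,
              plaq A (sh (sh q 2 (j : ℤ)) 1 (i : ℤ)) 1 2) := by linarith
    have B := plaq_sum_bound A hF q 1 2 1 c
    rw [hX, abs_neg]
    push_cast at B ⊢
    nlinarith
  · -- μ = 2
    show |A x (sh x 2 1)| ≤ 2 * (L : ℝ) * F
    have hμ' : c + 1 < L := by simpa using hμ
    have hG1 := gauge' hg Y a b (c + 1) ha hb hμ'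
    rw [lineN_succ] at hG1
    have hX : A x (sh x 2 1) = 0 := by linarith
    rw [hX]
    simp only [abs_zero]
    positivity


lemma interior_line {L : ℕ} {A : (Fin 3 → ℤ) → (Fin 3 → ℤ) → ℝ}
    (hA : ∀ x y, A x y = - A y x)
    (hg : ∀ (Y : Fin 3 → ℤ) (v : Fin 3 → Fin L),
      pathSum A (fun i => (L : ℤ) * Y i) (fun i => (L : ℤ) * Y i + (v i : ℤ)) = 0)
    {F : ℝ} (hF : ∀ x μ ν, |plaq A x μ ν| ≤ F) (hF0 : 0 ≤ F)
    (Y : Fin 3 → ℤ) (μ : Fin 3) (a b c k : ℕ)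
    (ha : a < L) (hb : b < L) (hc : c < L) (hk : (![a, b, c] : Fin 3 → ℕ) μ + k < L) :
    |lineN A (pt L Y a b c) μ k| ≤ (k : ℝ) * (2 * (L : ℝ) * F) := by
  fin_cases μ
  · show |lineN A (pt L Y a b c) 0 k| ≤ (k : ℝ) * (2 * (L : ℝ) * F)
    have hk0 : a + k < L := by simpa using hk
    clear hk
    induction k with
    | zero => simp [lineN_zero]
    | succ k ih =>
        rw [lineN_succ]
        have e : sh (pt L Y a b c) 0 (k : ℤ) = pt L Y (a + k) b c := by
          funext j; simp [pt, sh]; push_cast; ring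
        rw [e]
        have hbd := interior_bond hA hg hF hF0 Y 0 (a + k) b c (by omega) hb hc
          (by rw [show (![a + k, b, c] : Fin 3 → ℕ) 0 = a + k from rfl]; omega)
        have ihv := ih (by omega)
        calc |lineN A (pt L Y a b c) 0 k + A (pt L Y (a + k) b c) (sh (pt L Y (a + k) b c) 0 1)|
            ≤ |lineN A (pt L Y a b c) 0 k|
              + |A (pt L Y (a + k) b c) (sh (pt L Y (a + k) b c) 0 1)| := abs_add_le _ _
          _ ≤ ((k : ℝ) + 1) * (2 * (L : ℝ) * F) := by linarith
          _ = ((k + 1 : ℕ) : ℝ) * (2 * (L : ℝ) * F) := by push_cast; ring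
  · show |lineN A (pt L Y a b c) 1 k| ≤ (k : ℝ) * (2 * (L : ℝ) * F)
    have hk0 : b + k < L := by simpa using hk
    clear hk
    induction k with
    | zero => simp [lineN_zero]
    | succ k ih =>
        rw [lineN_succ]
        have e : sh (pt L Y a b c) 1 (k : ℤ) = pt L Y a (b + k) c := by
          funext j; simp [pt, sh]; push_cast; ring
        rw [e]
        have hbd := interior_bond hA hg hF hF0 Y 1 a (b + k) c ha (by omega) hc
          (by rw [show (![a, b + k, c] : Fin 3 → ℕ) 1 = b + k from rfl]; omega)
        have ihv := ih (by omega)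
        calc |lineN A (pt L Y a b c) 1 k + A (pt L Y a (b + k) c) (sh (pt L Y a (b + k) c) 1 1)|
            ≤ |lineN A (pt L Y a b c) 1 k|
              + |A (pt L Y a (b + k) c) (sh (pt L Y a (b + k) c) 1 1)| := abs_add_le _ _
          _ ≤ ((k : ℝ) + 1) * (2 * (L : ℝ) * F) := by linarith
          _ = ((k + 1 : ℕ) : ℝ) * (2 * (L : ℝ) * F) := by push_cast; ring
  · show |lineN A (pt L Y a b c) 2 k| ≤ (k : ℝ) * (2 * (L : ℝ) * F)
    have hk0 : c + k < L := by simpa using hk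
    clear hk
    induction k with
    | zero => simp [lineN_zero]
    | succ k ih =>
        rw [lineN_succ]
        have e : sh (pt L Y a b c) 2 (k : ℤ) = pt L Y a b (c + k) := by
          funext j; simp [pt, sh]; push_cast; ring
        rw [e]
        have hbd := interior_bond hA hg hF hF0 Y 2 a b (c + k) ha hb (by omega)
          (by rw [show (![a, b, c + k] : Fin 3 → ℕ) 2 = c + k from rfl]; omega)
        have ihv := ih (by omega)
        calc |lineN A (pt L Y a b c) 2 k + A (pt L Y a b (c + k)) (sh (pt L Y a b (c + k)) 2 1)|
            ≤ |lineN A (pt L Y a b c) 2 k|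
              + |A (pt L Y a b (c + k)) (sh (pt L Y a b (c + k)) 2 1)| := abs_add_le _ _
          _ ≤ ((k : ℝ) + 1) * (2 * (L : ℝ) * F) := by linarith
          _ = ((k + 1 : ℕ) : ℝ) * (2 * (L : ℝ) * F) := by push_cast; ring


lemma sh_pt0 (L : ℕ) (Y : Fin 3 → ℤ) (a b c k : ℕ) :
    sh (pt L Y a b c) 0 (k : ℤ) = pt L Y (a + k) b c := by
  funext j; simp [pt, sh]; push_cast; ring

lemma sh_pt1 (L : ℕ) (Y : Fin 3 → ℤ) (a b c k : ℕ) :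
    sh (pt L Y a b c) 1 (k : ℤ) = pt L Y a (b + k) c := by
  funext j; simp [pt, sh]; push_cast; ring

lemma sh_pt2 (L : ℕ) (Y : Fin 3 → ℤ) (a b c k : ℕ) :
    sh (pt L Y a b c) 2 (k : ℤ) = pt L Y a b (c + k) := by
  funext j; simp [pt, sh]; push_cast; ring

lemma sh_ptL (L : ℕ) (Y : Fin 3 → ℤ) (a b c : ℕ) (μ : Fin 3) :
    sh (pt L Y a b c) μ ((L : ℕ) : ℤ) = pt L (fun i => Y i + estep μ i) a b c := by
  funext j; simp [pt, sh]; ring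

lemma S_move {L : ℕ} {A : (Fin 3 → ℤ) → (Fin 3 → ℤ) → ℝ}
    (hA : ∀ x y, A x y = - A y x)
    (hg : ∀ (Y : Fin 3 → ℤ) (v : Fin 3 → Fin L),
      pathSum A (fun i => (L : ℤ) * Y i) (fun i => (L : ℤ) * Y i + (v i : ℤ)) = 0)
    {F : ℝ} (hF : ∀ x μ ν, |plaq A x μ ν| ≤ F) (hF0 : 0 ≤ F)
    (Y : Fin 3 → ℤ) (μ ν : Fin 3) (a b c k : ℕ)
    (ha : a < L) (hb : b < L) (hc : c < L) (hk : (![a, b, c] : Fin 3 → ℕ) ν + k < L) :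
    |lineN A (sh (pt L Y a b c) ν (k : ℤ)) μ L - lineN A (pt L Y a b c) μ L|
      ≤ 5 * (L : ℝ) ^ 2 * F := by
  set u := pt L Y a b c with hu
  have hkL : (k : ℝ) ≤ (L : ℝ) := by
    have : k < L := by omega
    exact_mod_cast this.le
  have hLL : (0 : ℝ) ≤ (L : ℝ) := by positivity
  have hIu : |lineN A u ν k| ≤ (k : ℝ) * (2 * (L : ℝ) * F) :=
    interior_line hA hg hF hF0 Y ν a b c k ha hb hc hk
  have hIu' : |lineN A (sh u μ ((L : ℕ) : ℤ)) ν k| ≤ (k : ℝ) * (2 * (L : ℝ) * F) := by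
    rw [hu, sh_ptL]
    exact interior_line hA hg hF hF0 (fun i => Y i + estep μ i) ν a b c k ha hb hc hk
  by_cases hμν : ν = μ
  · subst hμν
    have h1 : lineN A u ν (k + L) = lineN A u ν k + lineN A (sh u ν (k : ℤ)) ν L :=
      lineN_add A u ν k L
    have h2 : lineN A u ν (L + k) = lineN A u ν L + lineN A (sh u ν ((L : ℕ) : ℤ)) ν k :=
      lineN_add A u ν L k
    rw [Nat.add_comm k L] at h1
    have key : lineN A (sh u ν (k : ℤ)) ν L - lineN A u ν L
        = lineN A (sh u ν ((L : ℕ) : ℤ)) ν k - lineN A u ν k := by linarith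
    rw [key]
    have t1 := abs_sub (lineN A (sh u ν ((L : ℕ) : ℤ)) ν k) (lineN A u ν k)
    have h2LF : (0 : ℝ) ≤ 2 * (L : ℝ) * F := by positivity
    have hstep : (k : ℝ) * (2 * (L : ℝ) * F) ≤ (L : ℝ) * (2 * (L : ℝ) * F) :=
      mul_le_mul_of_nonneg_right hkL h2LF
    have hL2F : (0 : ℝ) ≤ (L : ℝ) ^ 2 * F := by positivity
    nlinarith
  · have R := rect A hA u μ ν L k
    have B := plaq_sum_bound A hF u μ ν L k
    have key : lineN A (sh u ν (k : ℤ)) μ L - lineN A u μ L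
        = lineN A (sh u μ ((L : ℕ) : ℤ)) ν k - lineN A u ν k
          - ∑ j ∈ Finset.range k, ∑ i ∈ Finset.range L,
              plaq A (sh (sh u ν (j : ℤ)) μ (i : ℤ)) μ ν := by linarith
    rw [key]
    have t1 := abs_sub (lineN A (sh u μ ((L : ℕ) : ℤ)) ν k - lineN A u ν k)
      (∑ j ∈ Finset.range k, ∑ i ∈ Finset.range L,
        plaq A (sh (sh u ν (j : ℤ)) μ (i : ℤ)) μ ν)
    have t2 := abs_sub (lineN A (sh u μ ((L : ℕ) : ℤ)) ν k) (lineN A u ν k)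
    have h2LF : (0 : ℝ) ≤ 2 * (L : ℝ) * F := by positivity
    have hstep : (k : ℝ) * (2 * (L : ℝ) * F) ≤ (L : ℝ) * (2 * (L : ℝ) * F) :=
      mul_le_mul_of_nonneg_right hkL h2LF
    have hstep2 : (k : ℝ) * (L : ℝ) * F ≤ (L : ℝ) * (L : ℝ) * F :=
      mul_le_mul_of_nonneg_right (mul_le_mul_of_nonneg_right hkL hLL) hF0
    nlinarith


section Steps

variable {L : ℕ} {A : (Fin 3 → ℤ) → (Fin 3 → ℤ) → ℝ}
  (hA : ∀ x y, A x y = - A y x)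
  (hg : ∀ (Y : Fin 3 → ℤ) (v : Fin 3 → Fin L),
    pathSum A (fun i => (L : ℤ) * Y i) (fun i => (L : ℤ) * Y i + (v i : ℤ)) = 0)
  {F : ℝ} (hF : ∀ x μ ν, |plaq A x μ ν| ≤ F) (hF0 : 0 ≤ F)

include hA hg hF hF0

lemma S_step0 (Y : Fin 3 → ℤ) (μ : Fin 3) (a a' b c : ℕ)
    (ha : a < L) (ha' : a' < L) (hb : b < L) (hc : c < L) :
    |lineN A (pt L Y a' b c) μ L - lineN A (pt L Y a b c) μ L| ≤ 5 * (L : ℝ) ^ 2 * F := by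
  rcases le_total a a' with h | h
  · have e : pt L Y a' b c = sh (pt L Y a b c) 0 ((a' - a : ℕ) : ℤ) := by
      rw [sh_pt0, show a + (a' - a) = a' from by omega]
    rw [e]
    exact S_move hA hg hF hF0 Y μ 0 a b c (a' - a) ha hb hc
      (by rw [show (![a, b, c] : Fin 3 → ℕ) 0 = a from rfl]; omega)
  · rw [abs_sub_comm]
    have e : pt L Y a b c = sh (pt L Y a' b c) 0 ((a - a' : ℕ) : ℤ) := by
      rw [sh_pt0, show a' + (a - a') = a from by omega]
    rw [e]
    exact S_move hA hg hF hF0 Y μ 0 a' b c (a - a') ha' hb hc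
      (by rw [show (![a', b, c] : Fin 3 → ℕ) 0 = a' from rfl]; omega)

lemma S_step1 (Y : Fin 3 → ℤ) (μ : Fin 3) (a b b' c : ℕ)
    (ha : a < L) (hb : b < L) (hb' : b' < L) (hc : c < L) :
    |lineN A (pt L Y a b' c) μ L - lineN A (pt L Y a b c) μ L| ≤ 5 * (L : ℝ) ^ 2 * F := by
  rcases le_total b b' with h | h
  · have e : pt L Y a b' c = sh (pt L Y a b c) 1 ((b' - b : ℕ) : ℤ) := by
      rw [sh_pt1, show b + (b' - b) = b' from by omega]
    rw [e]
    exact S_move hA hg hF hF0 Y μ 1 a b c (b' - b) ha hb hc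
      (by rw [show (![a, b, c] : Fin 3 → ℕ) 1 = b from rfl]; omega)
  · rw [abs_sub_comm]
    have e : pt L Y a b c = sh (pt L Y a b' c) 1 ((b - b' : ℕ) : ℤ) := by
      rw [sh_pt1, show b' + (b - b') = b from by omega]
    rw [e]
    exact S_move hA hg hF hF0 Y μ 1 a b' c (b - b') ha hb' hc
      (by rw [show (![a, b', c] : Fin 3 → ℕ) 1 = b' from rfl]; omega)

lemma S_step2 (Y : Fin 3 → ℤ) (μ : Fin 3) (a b c c' : ℕ)
    (ha : a < L) (hb : b < L) (hc : c < L) (hc' : c' < L) :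
    |lineN A (pt L Y a b c') μ L - lineN A (pt L Y a b c) μ L| ≤ 5 * (L : ℝ) ^ 2 * F := by
  rcases le_total c c' with h | h
  · have e : pt L Y a b c' = sh (pt L Y a b c) 2 ((c' - c : ℕ) : ℤ) := by
      rw [sh_pt2, show c + (c' - c) = c' from by omega]
    rw [e]
    exact S_move hA hg hF hF0 Y μ 2 a b c (c' - c) ha hb hc
      (by rw [show (![a, b, c] : Fin 3 → ℕ) 2 = c from rfl]; omega)
  · rw [abs_sub_comm]
    have e : pt L Y a b c = sh (pt L Y a b c') 2 ((c - c' : ℕ) : ℤ) := by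
      rw [sh_pt2, show c' + (c - c') = c from by omega]
    rw [e]
    exact S_move hA hg hF hF0 Y μ 2 a b c' (c - c') ha hb hc'
      (by rw [show (![a, b, c'] : Fin 3 → ℕ) 2 = c' from rfl]; omega)

lemma S_diff (Y : Fin 3 → ℤ) (μ : Fin 3) (a b c a' b' c' : ℕ)
    (ha : a < L) (hb : b < L) (hc : c < L)
    (ha' : a' < L) (hb' : b' < L) (hc' : c' < L) :
    |lineN A (pt L Y a b c) μ L - lineN A (pt L Y a' b' c') μ L|
      ≤ 15 * (L : ℝ) ^ 2 * F := by
  have h1 := S_step0 hA hg hF hF0 Y μ a a' b c ha ha' hb hc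
  have h2 := S_step1 hA hg hF hF0 Y μ a' b b' c ha' hb hb' hc
  have h3 := S_step2 hA hg hF hF0 Y μ a' b' c c' ha' hb' hc hc'
  set S1 := lineN A (pt L Y a b c) μ L
  set S2 := lineN A (pt L Y a' b c) μ L
  set S3 := lineN A (pt L Y a' b' c) μ L
  set S4 := lineN A (pt L Y a' b' c') μ L
  have e : S1 - S4 = -((S2 - S1) + (S3 - S2) + (S4 - S3)) := by ring
  rw [e, abs_neg]
  have t1 := abs_add_le ((S2 - S1) + (S3 - S2)) (S4 - S3)
  have t2 := abs_add_le (S2 - S1) (S3 - S2)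
  linarith


lemma S_bound (hL : 0 < L) {q : ℝ} (hq : ∀ Y μ, |Qavg L A Y μ| ≤ q)
    (Y : Fin 3 → ℤ) (μ : Fin 3) (a b c : ℕ) (ha : a < L) (hb : b < L) (hc : c < L) :
    |lineN A (pt L Y a b c) μ L| ≤ 15 * (L : ℝ) ^ 2 * F + q := by
  have hL0 : ((L : ℝ) ^ 3) ≠ 0 := by positivity
  have hQ : Qavg L A Y μ = ((L : ℝ) ^ 3)⁻¹
      * ∑ v : Fin 3 → Fin L, lineN A (pt L Y (v 0) (v 1) (v 2)) μ L := by
    rw [Qavg]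
    congr 1
    refine Finset.sum_congr rfl fun v _ => ?_
    have hp : (fun i => (L : ℤ) * Y i + ((v i : ℕ) : ℤ)) = pt L Y (v 0) (v 1) (v 2) := by
      funext j; fin_cases j <;> · simp [pt, sh, estep]; try ring
    rw [hp, lineSum_natCast]
  have hcard : (Fintype.card (Fin 3 → Fin L) : ℝ) = (L : ℝ) ^ 3 := by
    simp [Fintype.card_fun]
  set S := lineN A (pt L Y a b c) μ L with hS
  have key : S - Qavg L A Y μ = ((L : ℝ) ^ 3)⁻¹
      * ∑ v : Fin 3 → Fin L, (S - lineN A (pt L Y (v 0) (v 1) (v 2)) μ L) := by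
    rw [hQ, Finset.sum_sub_distrib, Finset.sum_const, Finset.card_univ, nsmul_eq_mul,
      mul_sub, hcard]
    field_simp
  have hsum : |∑ v : Fin 3 → Fin L, (S - lineN A (pt L Y (v 0) (v 1) (v 2)) μ L)|
      ≤ (L : ℝ) ^ 3 * (15 * (L : ℝ) ^ 2 * F) := by
    calc |∑ v : Fin 3 → Fin L, (S - lineN A (pt L Y (v 0) (v 1) (v 2)) μ L)|
        ≤ ∑ v : Fin 3 → Fin L, |S - lineN A (pt L Y (v 0) (v 1) (v 2)) μ L| :=
          Finset.abs_sum_le_sum_abs _ _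
      _ ≤ ∑ _v : Fin 3 → Fin L, 15 * (L : ℝ) ^ 2 * F :=
          Finset.sum_le_sum fun v _ =>
            S_diff hA hg hF hF0 Y μ a b c (v 0) (v 1) (v 2) ha hb hc
              (v 0).isLt (v 1).isLt (v 2).isLt
      _ = (L : ℝ) ^ 3 * (15 * (L : ℝ) ^ 2 * F) := by
          rw [Finset.sum_const, Finset.card_univ, nsmul_eq_mul, hcard]
  have hdiff : |S - Qavg L A Y μ| ≤ 15 * (L : ℝ) ^ 2 * F := by
    rw [key, abs_mul, abs_of_nonneg (by positivity : (0:ℝ) ≤ ((L : ℝ) ^ 3)⁻¹)]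
    calc ((L : ℝ) ^ 3)⁻¹ * |∑ v : Fin 3 → Fin L,
          (S - lineN A (pt L Y (v 0) (v 1) (v 2)) μ L)|
        ≤ ((L : ℝ) ^ 3)⁻¹ * ((L : ℝ) ^ 3 * (15 * (L : ℝ) ^ 2 * F)) := by
          apply mul_le_mul_of_nonneg_left hsum (by positivity)
      _ = 15 * (L : ℝ) ^ 2 * F := by field_simp
  have hQb := hq Y μ
  calc |S| = |(S - Qavg L A Y μ) + Qavg L A Y μ| := by ring_nf
    _ ≤ |S - Qavg L A Y μ| + |Qavg L A Y μ| := abs_add_le _ _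
    _ ≤ 15 * (L : ℝ) ^ 2 * F + q := by linarith

lemma crossing (hL : 0 < L) {q : ℝ} (hq : ∀ Y μ, |Qavg L A Y μ| ≤ q)
    (Y : Fin 3 → ℤ) (μ : Fin 3) (a b c : ℕ) (ha : a < L) (hb : b < L) (hc : c < L)
    (hμ : (![a, b, c] : Fin 3 → ℕ) μ = L - 1) :
    |A (pt L Y a b c) (sh (pt L Y a b c) μ 1)| ≤ 17 * (L : ℝ) ^ 2 * F + q := by
  have hL1 : ((L - 1 : ℕ) : ℝ) ≤ (L : ℝ) := by exact_mod_cast (Nat.sub_le L 1)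
  have h2LF : (0 : ℝ) ≤ 2 * (L : ℝ) * F := by positivity
  have hlin : ((L - 1 : ℕ) : ℝ) * (2 * (L : ℝ) * F) ≤ 2 * (L : ℝ) ^ 2 * F := by
    have := mul_le_mul_of_nonneg_right hL1 h2LF
    nlinarith
  fin_cases μ
  · have haL : a = L - 1 := by simpa using hμ
    subst haL
    have hSb := S_bound hA hg hF hF0 hL hq Y 0 0 b c hL hb hc
    have hIL := interior_line hA hg hF hF0 Y 0 0 b c (L - 1) hL hb hc
      (by rw [show (![0, b, c] : Fin 3 → ℕ) 0 = 0 from rfl]; omega)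
    have hsplit : lineN A (pt L Y 0 b c) 0 L = lineN A (pt L Y 0 b c) 0 (L - 1)
        + A (pt L Y (L - 1) b c) (sh (pt L Y (L - 1) b c) 0 1) := by
      rw [show L = (L - 1) + 1 from by omega, lineN_succ, sh_pt0]
      norm_num
    have : A (pt L Y (L - 1) b c) (sh (pt L Y (L - 1) b c) 0 1)
        = lineN A (pt L Y 0 b c) 0 L - lineN A (pt L Y 0 b c) 0 (L - 1) := by linarith
    show |A (pt L Y (L - 1) b c) (sh (pt L Y (L - 1) b c) 0 1)| ≤ 17 * (L : ℝ) ^ 2 * F + q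
    rw [this]
    have t := abs_sub (lineN A (pt L Y 0 b c) 0 L) (lineN A (pt L Y 0 b c) 0 (L - 1))
    linarith
  · have hbL : b = L - 1 := by simpa using hμ
    subst hbL
    have hSb := S_bound hA hg hF hF0 hL hq Y 1 a 0 c ha hL hc
    have hIL := interior_line hA hg hF hF0 Y 1 a 0 c (L - 1) ha hL hc
      (by rw [show (![a, 0, c] : Fin 3 → ℕ) 1 = 0 from rfl]; omega)
    have hsplit : lineN A (pt L Y a 0 c) 1 L = lineN A (pt L Y a 0 c) 1 (L - 1)
        + A (pt L Y a (L - 1) c) (sh (pt L Y a (L - 1) c) 1 1) := by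
      rw [show L = (L - 1) + 1 from by omega, lineN_succ, sh_pt1]
      norm_num
    have : A (pt L Y a (L - 1) c) (sh (pt L Y a (L - 1) c) 1 1)
        = lineN A (pt L Y a 0 c) 1 L - lineN A (pt L Y a 0 c) 1 (L - 1) := by linarith
    show |A (pt L Y a (L - 1) c) (sh (pt L Y a (L - 1) c) 1 1)| ≤ 17 * (L : ℝ) ^ 2 * F + q
    rw [this]
    have t := abs_sub (lineN A (pt L Y a 0 c) 1 L) (lineN A (pt L Y a 0 c) 1 (L - 1))
    linarith
  · have hcL : c = L - 1 := by simpa using hμ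
    subst hcL
    have hSb := S_bound hA hg hF hF0 hL hq Y 2 a b 0 ha hb hL
    have hIL := interior_line hA hg hF hF0 Y 2 a b 0 (L - 1) ha hb hL
      (by rw [show (![a, b, 0] : Fin 3 → ℕ) 2 = 0 from rfl]; omega)
    have hsplit : lineN A (pt L Y a b 0) 2 L = lineN A (pt L Y a b 0) 2 (L - 1)
        + A (pt L Y a b (L - 1)) (sh (pt L Y a b (L - 1)) 2 1) := by
      rw [show L = (L - 1) + 1 from by omega, lineN_succ, sh_pt2]
      norm_num
    have : A (pt L Y a b (L - 1)) (sh (pt L Y a b (L - 1)) 2 1)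
        = lineN A (pt L Y a b 0) 2 L - lineN A (pt L Y a b 0) 2 (L - 1) := by linarith
    show |A (pt L Y a b (L - 1)) (sh (pt L Y a b (L - 1)) 2 1)| ≤ 17 * (L : ℝ) ^ 2 * F + q
    rw [this]
    have t := abs_sub (lineN A (pt L Y a b 0) 2 L) (lineN A (pt L Y a b 0) 2 (L - 1))
    linarith

end Steps

end Stmt10

/-- One-scale axial gauge bound: there is `c₀ = O(1)`, independent of `L` and `A`,
such that any antisymmetric bond function `A` on ℤ³ satisfying the unsymmetrized
axial gauge condition in every block obeys
`|A(b)| ≤ c₀ L² ‖dA‖_∞ + L ‖𝒬A‖_∞` on every bond `b`. -/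
theorem stmt_10 :
    ∃ c₀ : ℝ, 0 < c₀ ∧
      ∀ (L : ℕ), 0 < L →
        ∀ (A : (Fin 3 → ℤ) → (Fin 3 → ℤ) → ℝ),
          (∀ x y, A x y = - A y x) →
          (∀ (Y : Fin 3 → ℤ) (v : Fin 3 → Fin L),
            pathSum A (fun i => (L : ℤ) * Y i) (fun i => (L : ℤ) * Y i + (v i : ℤ)) = 0) →
          ∀ (F q : ℝ),
            (∀ x μ ν, |plaq A x μ ν| ≤ F) →
            (∀ Y μ, |Qavg L A Y μ| ≤ q) →
            ∀ (x : Fin 3 → ℤ) (μ : Fin 3),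
              |A x (fun j => x j + estep μ j)| ≤ c₀ * (L : ℝ) ^ 2 * F + (L : ℝ) * q := by
  refine ⟨100, by norm_num, ?_⟩
  intro L hL A hA hg F q hF hq x μ
  have hF0 : 0 ≤ F := (abs_nonneg _).trans (hF (fun _ => 0) 0 0)
  have hq0 : 0 ≤ q := (abs_nonneg _).trans (hq 0 0)
  have hL' : (0 : ℤ) < (L : ℤ) := by exact_mod_cast hL
  have hLne : ((L : ℤ)) ≠ 0 := by exact_mod_cast hL.ne'
  have hL1 : (1 : ℝ) ≤ (L : ℝ) := by exact_mod_cast hL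
  set Y : Fin 3 → ℤ := fun i => x i / (L : ℤ) with hY
  have hm0 : ∀ i : Fin 3, 0 ≤ x i % (L : ℤ) := fun i => Int.emod_nonneg _ hLne
  have hm1 : ∀ i : Fin 3, x i % (L : ℤ) < L := fun i => Int.emod_lt_of_pos _ hL'
  set a : ℕ := (x 0 % (L : ℤ)).toNat with haa
  set b : ℕ := (x 1 % (L : ℤ)).toNat with hbb
  set c : ℕ := (x 2 % (L : ℤ)).toNat with hcc
  have ha : a < L := by have := hm0 0; have := hm1 0; omega
  have hb : b < L := by have := hm0 1; have := hm1 1; omega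
  have hc : c < L := by have := hm0 2; have := hm1 2; omega
  have hx : x = Stmt10.pt L Y a b c := by
    funext j
    fin_cases j
    · show x 0 = Stmt10.pt L Y a b c 0
      have e : Stmt10.pt L Y a b c 0 = (L : ℤ) * (x 0 / (L : ℤ)) + (a : ℤ) := by
        simp [Stmt10.pt, Stmt10.sh, estep, hY]
      rw [e, haa, Int.toNat_of_nonneg (hm0 0)]
      linarith [Int.mul_ediv_add_emod (x 0) (L : ℤ)]
    · show x 1 = Stmt10.pt L Y a b c 1
      have e : Stmt10.pt L Y a b c 1 = (L : ℤ) * (x 1 / (L : ℤ)) + (b : ℤ) := by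
        simp [Stmt10.pt, Stmt10.sh, estep, hY]
      rw [e, hbb, Int.toNat_of_nonneg (hm0 1)]
      linarith [Int.mul_ediv_add_emod (x 1) (L : ℤ)]
    · show x 2 = Stmt10.pt L Y a b c 2
      have e : Stmt10.pt L Y a b c 2 = (L : ℤ) * (x 2 / (L : ℤ)) + (c : ℤ) := by
        simp [Stmt10.pt, Stmt10.sh, estep, hY]
      rw [e, hcc, Int.toNat_of_nonneg (hm0 2)]
      linarith [Int.mul_ediv_add_emod (x 2) (L : ℤ)]
  have hbond : (fun j => x j + estep μ j) = Stmt10.sh x μ 1 := by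
    funext j; simp [Stmt10.sh]
  rw [hbond, hx]
  have hcomp : (![a, b, c] : Fin 3 → ℕ) μ < L := by
    fin_cases μ
    · simpa using ha
    · simpa using hb
    · simpa using hc
  have hLq : 0 ≤ ((L : ℝ) - 1) * q := by nlinarith
  have hL2F : 0 ≤ (L : ℝ) ^ 2 * F := by positivity
  by_cases hint : (![a, b, c] : Fin 3 → ℕ) μ + 1 < L
  · have hbd := Stmt10.interior_bond hA hg hF hF0 Y μ a b c ha hb hc hint
    have h2 : 2 * (L : ℝ) * F ≤ 100 * (L : ℝ) ^ 2 * F := by nlinarith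
    linarith
  · have hedge : (![a, b, c] : Fin 3 → ℕ) μ = L - 1 := by omega
    have hbd := Stmt10.crossing hA hg hF hF0 hL hq Y μ a b c ha hb hc hedge
    have h2 : 17 * (L : ℝ) ^ 2 * F + q ≤ 100 * (L : ℝ) ^ 2 * F + (L : ℝ) * q := by
      nlinarith
    linarith
end

section
/- (L² bound for plaquette averaging.) Let L be a positive integer. For a function F on unit plaquettes of ℤ³ (with fixed orientation plane μν) define, for y ∈ (Lℤ)³, (𝒬^{(2)}F)(P_y) = L⁻⁵ Σ_{x ∈ B(y)} Σ_{p ⊂ P_x} F(p), where P_x is the L×L plaquette with corner x in the μν-plane (containing L² unit plaquettes p) and B(y) is the block of L³ lattice points associated to y. Then Σ_{y ∈ (Lℤ)³} |(𝒬^{(2)}F)(P_y)|² ≤ L⁻³ Σ_p |F(p)|², where the right sum is over all unit plaquettes in the μν-plane orientation. -/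
open Finset

set_option maxHeartbeats 1000000

lemma shift_sum' (L n : ℕ) (hL : 0 < L) [NeZero (L * n)]
    (g : (Fin 3 → ZMod (L * n)) → ℝ) (c : Fin 3 → ZMod (L * n)) :
    ∑ Y : Fin 3 → Fin n, ∑ v : Fin 3 → Fin L,
      g (fun j => (((L * (Y j : ℕ) + (v j : ℕ) : ℕ) : ZMod (L * n)) + c j))
    = ∑ x : Fin 3 → ZMod (L * n), g x := by
  have hn : 0 < n := by
    have h0 : L * n ≠ 0 := NeZero.ne _
    exact Nat.pos_of_ne_zero (fun h => h0 (by simp [h]))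
  have hbij : Function.Bijective
      (fun p : (Fin 3 → Fin n) × (Fin 3 → Fin L) =>
        (fun j => (((L * (p.1 j : ℕ) + (p.2 j : ℕ) : ℕ) : ZMod (L * n)) + c j))) := ?_
  case _ =>
    have main := Fintype.sum_bijective _ hbij
      (fun p : (Fin 3 → Fin n) × (Fin 3 → Fin L) =>
        g (fun j => (((L * (p.1 j : ℕ) + (p.2 j : ℕ) : ℕ) : ZMod (L * n)) + c j)))
      g (fun p => rfl)
    rw [← main, Fintype.sum_prod_type]
  rw [Fintype.bijective_iff_injective_and_card]
  constructor
  · intro p q h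
    have key : ∀ j : Fin 3,
        L * (p.1 j : ℕ) + (p.2 j : ℕ) = L * (q.1 j : ℕ) + (q.2 j : ℕ) := by
      intro j
      have h1 := congrFun h j
      have h2 : ((L * (p.1 j : ℕ) + (p.2 j : ℕ) : ℕ) : ZMod (L * n))
          = ((L * (q.1 j : ℕ) + (q.2 j : ℕ) : ℕ) : ZMod (L * n)) :=
        add_right_cancel h1
      have hp : L * (p.1 j : ℕ) + (p.2 j : ℕ) < L * n := by
        have := (p.1 j).isLt; have := (p.2 j).isLt; nlinarith
      have hq : L * (q.1 j : ℕ) + (q.2 j : ℕ) < L * n := by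
        have := (q.1 j).isLt; have := (q.2 j).isLt; nlinarith
      have := congrArg ZMod.val h2
      rwa [ZMod.val_cast_of_lt hp, ZMod.val_cast_of_lt hq] at this
    have h1 : p.1 = q.1 := by
      funext j
      have := key j
      have e1 : (L * (p.1 j : ℕ) + (p.2 j : ℕ)) / L = (p.1 j : ℕ) := by
        rw [Nat.mul_add_div hL, Nat.div_eq_of_lt (p.2 j).isLt, Nat.add_zero]
      have e2 : (L * (q.1 j : ℕ) + (q.2 j : ℕ)) / L = (q.1 j : ℕ) := by
        rw [Nat.mul_add_div hL, Nat.div_eq_of_lt (q.2 j).isLt, Nat.add_zero]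
      apply Fin.ext; rw [← e1, ← e2, this]
    have h2 : p.2 = q.2 := by
      funext j
      have := key j
      apply Fin.ext
      have e1 : (L * (p.1 j : ℕ) + (p.2 j : ℕ)) % L = (p.2 j : ℕ) := by
        rw [Nat.mul_add_mod, Nat.mod_eq_of_lt (p.2 j).isLt]
      have e2 : (L * (q.1 j : ℕ) + (q.2 j : ℕ)) % L = (q.2 j : ℕ) := by
        rw [Nat.mul_add_mod, Nat.mod_eq_of_lt (q.2 j).isLt]
      rw [← e1, ← e2, this]
    exact Prod.ext h1 h2
  · simp only [Fintype.card_prod, Fintype.card_fun, Fintype.card_fin, Fintype.card_pi,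
      ZMod.card]
    simp [Finset.prod_const, Nat.mul_pow, Nat.mul_comm]

lemma sum_rot {α β γ : Type*} [Fintype α] [Fintype β] [Fintype γ]
    (h : α → β → γ → ℝ) :
    (∑ v : α, ∑ a : β, ∑ b : γ, h v a b) = ∑ a : β, ∑ b : γ, ∑ v : α, h v a b := by
  rw [Finset.sum_comm]
  exact Finset.sum_congr rfl fun a _ => Finset.sum_comm

/-- L² bound for plaquette averaging on the torus of side `L·n`:
`Σ_Y |(𝒬^{(2)}F)(P_Y)|² ≤ L⁻³ Σ_p |F(p)|²`, where
`(𝒬^{(2)}F)(P_Y) = L⁻⁵ Σ_{x∈B(Y)} Σ_{p ⊂ P_x} F(p)` and plaquettes in the fixed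
`μν` orientation are labelled by their anchor points. -/
theorem stmt_12 (L n : ℕ) (hL : 0 < L) (hn : 0 < n) [NeZero (L * n)]
    (μ ν : Fin 3) (hμν : μ ≠ ν)
    (F : (Fin 3 → ZMod (L * n)) → ℝ) :
    (∑ Y : Fin 3 → Fin n,
      (((L : ℝ) ^ 5)⁻¹ * ∑ v : Fin 3 → Fin L, ∑ a : Fin L, ∑ b : Fin L,
        F (fun j => ((L * (Y j : ℕ) + (v j : ℕ)
            + (if j = μ then (a : ℕ) else 0)
            + (if j = ν then (b : ℕ) else 0) : ℕ) : ZMod (L * n)))) ^ 2)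
    ≤ ((L : ℝ) ^ 3)⁻¹ * ∑ x : Fin 3 → ZMod (L * n), (F x) ^ 2 := by
  classical
  have hLR : (0:ℝ) < (L:ℝ) := by exact_mod_cast hL
  set X : (Fin 3 → Fin n) → (Fin 3 → Fin L) → Fin L → Fin L → (Fin 3 → ZMod (L*n)) :=
    fun Y v a b => (fun j => ((L * (Y j : ℕ) + (v j : ℕ)
            + (if j = μ then (a : ℕ) else 0)
            + (if j = ν then (b : ℕ) else 0) : ℕ) : ZMod (L * n))) with hX
  -- Cauchy–Schwarz for each Y
  have cs : ∀ Y : Fin 3 → Fin n,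
      (((L : ℝ) ^ 5)⁻¹ * ∑ v : Fin 3 → Fin L, ∑ a : Fin L, ∑ b : Fin L, F (X Y v a b)) ^ 2
      ≤ ((L : ℝ) ^ 5)⁻¹ * ∑ v : Fin 3 → Fin L, ∑ a : Fin L, ∑ b : Fin L, (F (X Y v a b))^2 := by
    intro Y
    have hcard : (Fintype.card ((Fin 3 → Fin L) × Fin L × Fin L) : ℝ) = (L:ℝ)^5 := by
      simp only [Fintype.card_prod, Fintype.card_fun, Fintype.card_fin]
      push_cast; ring
    have h := sq_sum_le_card_mul_sum_sq (s := (Finset.univ : Finset ((Fin 3 → Fin L) × Fin L × Fin L)))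
      (f := fun p => F (X Y p.1 p.2.1 p.2.2))
    rw [mul_pow]
    have e1 : (∑ v : Fin 3 → Fin L, ∑ a : Fin L, ∑ b : Fin L, F (X Y v a b))
        = ∑ p : (Fin 3 → Fin L) × Fin L × Fin L, F (X Y p.1 p.2.1 p.2.2) := by
      rw [Fintype.sum_prod_type]; simp [Fintype.sum_prod_type]
    have e2 : (∑ v : Fin 3 → Fin L, ∑ a : Fin L, ∑ b : Fin L, (F (X Y v a b))^2)
        = ∑ p : (Fin 3 → Fin L) × Fin L × Fin L, (F (X Y p.1 p.2.1 p.2.2))^2 := by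
      rw [Fintype.sum_prod_type]; simp [Fintype.sum_prod_type]
    rw [e1, e2]
    rw [Finset.card_univ] at h
    have hS : (∑ p : (Fin 3 → Fin L) × Fin L × Fin L, F (X Y p.1 p.2.1 p.2.2))^2
        ≤ (L:ℝ)^5 * ∑ p : (Fin 3 → Fin L) × Fin L × Fin L, (F (X Y p.1 p.2.1 p.2.2))^2 := by
      rw [← hcard]; exact h
    have h2 := mul_le_mul_of_nonneg_left hS
      (le_of_lt (by positivity : (0:ℝ) < (((L:ℝ)^5)⁻¹)^2))
    refine h2.trans_eq ?_
    rw [← mul_assoc]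
    congr 1
    have hL5 : ((L:ℝ)^5) ≠ 0 := by positivity
    field_simp
  calc (∑ Y : Fin 3 → Fin n,
      (((L : ℝ) ^ 5)⁻¹ * ∑ v : Fin 3 → Fin L, ∑ a : Fin L, ∑ b : Fin L, F (X Y v a b)) ^ 2)
      ≤ ∑ Y : Fin 3 → Fin n, ((L : ℝ) ^ 5)⁻¹ *
          ∑ v : Fin 3 → Fin L, ∑ a : Fin L, ∑ b : Fin L, (F (X Y v a b))^2 :=
        Finset.sum_le_sum (fun Y _ => cs Y)
    _ = ((L : ℝ) ^ 5)⁻¹ * ∑ a : Fin L, ∑ b : Fin L, ∑ Y : Fin 3 → Fin n,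
          ∑ v : Fin 3 → Fin L, (F (X Y v a b))^2 := by
        rw [← Finset.mul_sum]
        congr 1
        have e3 : ∀ Y : Fin 3 → Fin n,
            (∑ v : Fin 3 → Fin L, ∑ a : Fin L, ∑ b : Fin L, (F (X Y v a b))^2)
            = ∑ a : Fin L, ∑ b : Fin L, ∑ v : Fin 3 → Fin L, (F (X Y v a b))^2 :=
          fun Y => sum_rot _
        rw [Finset.sum_congr rfl (fun Y _ => e3 Y)]
        exact sum_rot _
    _ = ((L : ℝ) ^ 5)⁻¹ * ∑ a : Fin L, ∑ b : Fin L,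
          ∑ x : Fin 3 → ZMod (L*n), (F x)^2 := by
        congr 1
        apply Finset.sum_congr rfl; intro a _
        apply Finset.sum_congr rfl; intro b _
        have := shift_sum' L n hL (fun x => (F x)^2)
          (fun j => (((if j = μ then (a : ℕ) else 0) : ℕ) : ZMod (L*n))
            + (((if j = ν then (b : ℕ) else 0) : ℕ) : ZMod (L*n)))
        rw [← this]
        apply Finset.sum_congr rfl; intro Y _
        apply Finset.sum_congr rfl; intro v _
        congr 1
        apply congrArg
        funext j
        simp only [hX]
        push_cast
        ring
    _ = ((L : ℝ) ^ 3)⁻¹ * ∑ x : Fin 3 → ZMod (L * n), (F x) ^ 2 := by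
        simp only [Finset.sum_const, Finset.card_univ, Fintype.card_fin, nsmul_eq_mul]
        field_simp
end

section
/- (Weight factor comparison.) Let L ≥ 2, let p be a positive integer, let N be a positive integer, and let 0 < e < 1 satisfy −log e ≥ (p/2) log L. For 0 ≤ j ≤ N define p_j = ( (1/2)(N − j) log L − log e )^p. Then for all 0 ≤ j, j′ ≤ N: p_{j′} ≤ e^{|j−j′|} p_j. -/
/-- Weight factor comparison: with `p_j = ((1/2)(N − j) log L − log e)^p` and
`−log e ≥ (p/2) log L`, one has `p_{j′} ≤ e^{|j−j′|} p_j` for all `0 ≤ j, j′ ≤ N`. -/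
theorem stmt_15 (L : ℝ) (hL : 2 ≤ L) (p N : ℕ) (hp : 0 < p) (hN : 0 < N)
    (e : ℝ) (he0 : 0 < e) (he1 : e < 1)
    (he : (p : ℝ) / 2 * Real.log L ≤ - Real.log e) :
    ∀ j j' : ℕ, j ≤ N → j' ≤ N →
      ((1 / 2) * ((N : ℝ) - (j' : ℝ)) * Real.log L - Real.log e) ^ p ≤
        Real.exp (|(j : ℝ) - (j' : ℝ)|) *
          ((1 / 2) * ((N : ℝ) - (j : ℝ)) * Real.log L - Real.log e) ^ p := by
  intro j j' hj hj'
  have hLL : 0 < Real.log L := Real.log_pos (by linarith)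
  set A := (1 / 2) * ((N : ℝ) - (j : ℝ)) * Real.log L - Real.log e with hA
  set B := (1 / 2) * ((N : ℝ) - (j' : ℝ)) * Real.log L - Real.log e with hB
  set d := |(j : ℝ) - (j' : ℝ)| with hd
  have hdj : (j : ℝ) - j' ≤ d := le_abs_self _
  have hd0 : 0 ≤ d := abs_nonneg _
  have hjN : (j : ℝ) ≤ N := Nat.cast_le.mpr hj
  have hj'N : (j' : ℝ) ≤ N := Nat.cast_le.mpr hj'
  have hp1 : (1 : ℝ) ≤ p := Nat.one_le_cast.mpr hp
  have hp0 : (0 : ℝ) < p := by linarith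
  have hpLL : (p : ℝ) / 2 * Real.log L ≤ A := by
    have h0 : 0 ≤ (1 / 2) * ((N : ℝ) - j) * Real.log L := by
      have : 0 ≤ (N : ℝ) - j := by linarith
      positivity
    simp only [hA]; linarith
  have hpLLB : (p : ℝ) / 2 * Real.log L ≤ B := by
    have h0 : 0 ≤ (1 / 2) * ((N : ℝ) - j') * Real.log L := by
      have : 0 ≤ (N : ℝ) - j' := by linarith
      positivity
    simp only [hB]; linarith
  have hA0 : 0 < A := lt_of_lt_of_le (by nlinarith) hpLL
  have hB0 : 0 < B := lt_of_lt_of_le (by nlinarith) hpLLB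
  have hBle : B ≤ (1 + d / p) * A := by
    have hBA : B = A + (1 / 2) * ((j : ℝ) - j') * Real.log L := by
      simp only [hA, hB]; ring
    have h1 : d * Real.log L / 2 ≤ d / p * A := by
      calc d * Real.log L / 2 = d / p * ((p : ℝ) / 2 * Real.log L) := by
            field_simp
        _ ≤ d / p * A :=
            mul_le_mul_of_nonneg_left hpLL (div_nonneg hd0 hp0.le)
    have h2 : (1 / 2) * ((j : ℝ) - j') * Real.log L ≤ d * Real.log L / 2 := by
      nlinarith
    have hexpand : (1 + d / p) * A = A + d / p * A := by ring
    linarith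
  have hexp : (1 + d / p) ^ p ≤ Real.exp d := by
    calc (1 + d / p) ^ p ≤ (Real.exp (d / p)) ^ p := by
          apply pow_le_pow_left₀ (by positivity)
          have := Real.add_one_le_exp (d / p)
          linarith
      _ = Real.exp d := by
          rw [← Real.exp_nat_mul]
          congr 1
          field_simp
  calc B ^ p ≤ ((1 + d / p) * A) ^ p := pow_le_pow_left₀ hB0.le hBle p
    _ = (1 + d / p) ^ p * A ^ p := mul_pow _ _ _
    _ ≤ Real.exp d * A ^ p :=
        mul_le_mul_of_nonneg_right hexp (pow_nonneg hA0.le p)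
end
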